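/- Let G be a shortcut group. Then G acts freely and cocompactly on a shortcut graph. Likewise, if G is strongly shortcut, then G acts freely and cocompactly on a strongly shortcut graph. -/

import Mathlib

open scoped Classical

noncomputable section

namespace ShortcutGraphs

/-- Path metric on (the geometric realization of) the cycle graph `C` with `n` edges:
points of `C` are parametrized by `ℝ` modulo `n`, with each edge isometric to `[0,1]`. -/
def cdist (n : ℕ) (p q : ℝ) : ℝ := ⨅ k : ℤ, |p - q + k * (n : ℝ)|

variable {V : Type*}

/-- A cycle of length `n` in the simplicial graph `G`: a nondegenerate combinatorial map
from the cycle graph with `n` edges, recorded by the images of its vertices `0, 1, …, n-1`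
(indexed by `ZMod n`); consecutive vertices map to adjacent vertices of `G`. -/
def IsCycle (G : SimpleGraph V) (n : ℕ) (c : ZMod n → V) : Prop :=
  ∀ i : ZMod n, G.Adj (c i) (c (i + 1))

/-- Distance, in the geometric realization of the graph `G` (each edge isometric to `[0,1]`,
equipped with the path metric), between the images under the cycle `c` of the points of the
cycle graph parametrized by `p` and `q`.  The point parametrized by `p` lies on the edge of
the cycle joining vertex `⌊p⌋` to vertex `⌊p⌋ + 1`, at distance `p - ⌊p⌋` from the former; a
geodesic between two points of a graph either stays within one closed edge (the `if` terms)
or consists of a piece of an edge, a geodesic between two vertices, and a piece of an edge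
(the `route` term). -/
def rdist (G : SimpleGraph V) (n : ℕ) (c : ZMod n → V) (p q : ℝ) : ℝ :=
  let i : ZMod n := ((⌊p⌋ : ℤ) : ZMod n)
  let j : ZMod n := ((⌊q⌋ : ℤ) : ZMod n)
  let s : ℝ := Int.fract p
  let t : ℝ := Int.fract q
  let a : V := c i
  let b : V := c (i + 1)
  let u : V := c j
  let v : V := c (j + 1)
  let route : ℝ :=
    min (min (s + (G.dist a u : ℝ) + t) (s + (G.dist a v : ℝ) + (1 - t)))
        (min ((1 - s) + (G.dist b u : ℝ) + t) ((1 - s) + (G.dist b v : ℝ) + (1 - t)))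
  min route
    (min (if a = u ∧ b = v then |s - t| else route)
         (if a = v ∧ b = u then |s + t - 1| else route))

/-- Two points of the cycle graph with `n` edges are antipodal if their distance is `n/2`. -/
def Antipodal (n : ℕ) (p q : ℝ) : Prop := cdist n p q = (n : ℝ) / 2

/-- The cycle `c` is isometric: it is an isometric embedding at the level of all points of
the geometric realizations. -/
def IsIsometricCycle (G : SimpleGraph V) (n : ℕ) (c : ZMod n → V) : Prop :=
  ∀ p q : ℝ, rdist G n c p q = cdist n p q

/-- The cycle `c` is `ξ`-almost isometric: `d_Γ(f(p), f(q)) ≥ ξ·|C|/2` for every antipodal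
pair of points `p, q` of the cycle. -/
def IsAlmostIsometricCycle (G : SimpleGraph V) (n : ℕ) (c : ZMod n → V) (ξ : ℝ) : Prop :=
  ∀ p q : ℝ, Antipodal n p q → ξ * ((n : ℝ) / 2) ≤ rdist G n c p q

/-- A graph is shortcut if there is a bound `θ` on the lengths of its isometric cycles. -/
def Shortcut (G : SimpleGraph V) : Prop :=
  ∃ θ : ℕ, ∀ (n : ℕ) (c : ZMod n → V), 0 < n → IsCycle G n c → IsIsometricCycle G n c → n ≤ θ

/-- A graph is strongly shortcut if for some `ξ ∈ (0,1)` there is a bound `θ` on the lengths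
of its `ξ`-almost isometric cycles. -/
def StronglyShortcut (G : SimpleGraph V) : Prop :=
  ∃ (θ : ℕ) (ξ : ℝ), 0 < ξ ∧ ξ < 1 ∧
    ∀ (n : ℕ) (c : ZMod n → V), 0 < n → IsCycle G n c → IsAlmostIsometricCycle G n c ξ → n ≤ θ

/-- The group `Gp` acts on the graph `G` by graph automorphisms, via the permutation
representation `ρ`. -/
def IsGraphAction (Gp : Type) [Group Gp] {V : Type} (G : SimpleGraph V)
    (ρ : Gp →* Equiv.Perm V) : Prop :=
  ∀ (g : Gp) (u v : V), G.Adj (ρ g u) (ρ g v) ↔ G.Adj u v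

/-- The action is proper: all vertex stabilizers are finite. -/
def ProperAction (Gp : Type) [Group Gp] {V : Type} (ρ : Gp →* Equiv.Perm V) : Prop :=
  ∀ v : V, {g : Gp | ρ g v = v}.Finite

/-- The action is cocompact: there are finitely many orbits of vertices and of edges. -/
def CocompactAction (Gp : Type) [Group Gp] {V : Type} (G : SimpleGraph V)
    (ρ : Gp →* Equiv.Perm V) : Prop :=
  (∃ V₀ : Finset V, ∀ v : V, ∃ g : Gp, ∃ v₀ ∈ V₀, ρ g v₀ = v) ∧
  (∃ E₀ : Finset (V × V), ∀ u v : V, G.Adj u v →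
      ∃ g : Gp, ∃ e ∈ E₀, ρ g e.1 = u ∧ ρ g e.2 = v)

/-- The action is free: no nontrivial element fixes a vertex. -/
def FreeAction (Gp : Type) [Group Gp] {V : Type} (ρ : Gp →* Equiv.Perm V) : Prop :=
  ∀ g : Gp, g ≠ 1 → ∀ v : V, ρ g v ≠ v

/-- A group is shortcut if it acts properly and cocompactly on a shortcut graph
(a connected simplicial graph with a bound on the lengths of its isometric cycles). -/
def ShortcutGroup (Gp : Type) [Group Gp] : Prop :=
  ∃ (V : Type) (G : SimpleGraph V) (ρ : Gp →* Equiv.Perm V),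
    G.Connected ∧ IsGraphAction Gp G ρ ∧ ProperAction Gp ρ ∧
      CocompactAction Gp G ρ ∧ Shortcut G

/-- A group is strongly shortcut if it acts properly and cocompactly on a strongly shortcut
graph. -/
def StronglyShortcutGroup (Gp : Type) [Group Gp] : Prop :=
  ∃ (V : Type) (G : SimpleGraph V) (ρ : Gp →* Equiv.Perm V),
    G.Connected ∧ IsGraphAction Gp G ρ ∧ ProperAction Gp ρ ∧
      CocompactAction Gp G ρ ∧ StronglyShortcut G


/-! ### Auxiliary machinery -/

/-- The "route" part of `rdist`, abstracted. -/
def routeF (dAU dAV dBU dBV : ℕ) (s t : ℝ) : ℝ :=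
  min (min (s + (dAU : ℝ) + t) (s + (dAV : ℝ) + (1 - t)))
      (min ((1 - s) + (dBU : ℝ) + t) ((1 - s) + (dBV : ℝ) + (1 - t)))

/-- `rdist`, abstracted over the four vertex distances and two coincidence conditions. -/
def rform (dAU dAV dBU dBV : ℕ) (CA1 CB1 CA2 CB2 : Prop) (s t : ℝ) : ℝ :=
  min (routeF dAU dAV dBU dBV s t)
    (min (if CA1 ∧ CB1 then |s - t| else routeF dAU dAV dBU dBV s t)
         (if CA2 ∧ CB2 then |s + t - 1| else routeF dAU dAV dBU dBV s t))

lemma rdist_eq (G : SimpleGraph V) (n : ℕ) (c : ZMod n → V) (p q : ℝ) :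
    rdist G n c p q =
      rform (G.dist (c ((⌊p⌋ : ℤ) : ZMod n)) (c ((⌊q⌋ : ℤ) : ZMod n)))
            (G.dist (c ((⌊p⌋ : ℤ) : ZMod n)) (c (((⌊q⌋ : ℤ) : ZMod n) + 1)))
            (G.dist (c (((⌊p⌋ : ℤ) : ZMod n) + 1)) (c ((⌊q⌋ : ℤ) : ZMod n)))
            (G.dist (c (((⌊p⌋ : ℤ) : ZMod n) + 1)) (c (((⌊q⌋ : ℤ) : ZMod n) + 1)))
            (c ((⌊p⌋ : ℤ) : ZMod n) = c ((⌊q⌋ : ℤ) : ZMod n))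
            (c (((⌊p⌋ : ℤ) : ZMod n) + 1) = c (((⌊q⌋ : ℤ) : ZMod n) + 1))
            (c ((⌊p⌋ : ℤ) : ZMod n) = c (((⌊q⌋ : ℤ) : ZMod n) + 1))
            (c (((⌊p⌋ : ℤ) : ZMod n) + 1) = c ((⌊q⌋ : ℤ) : ZMod n))
            (Int.fract p) (Int.fract q) := rfl

lemma routeF_le_AU {dAU dAV dBU dBV : ℕ} {s t : ℝ} :
    routeF dAU dAV dBU dBV s t ≤ s + (dAU : ℝ) + t :=
  le_trans (min_le_left _ _) (min_le_left _ _)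

lemma routeF_le_AV {dAU dAV dBU dBV : ℕ} {s t : ℝ} :
    routeF dAU dAV dBU dBV s t ≤ s + (dAV : ℝ) + (1 - t) :=
  le_trans (min_le_left _ _) (min_le_right _ _)

lemma routeF_le_BU {dAU dAV dBU dBV : ℕ} {s t : ℝ} :
    routeF dAU dAV dBU dBV s t ≤ (1 - s) + (dBU : ℝ) + t :=
  le_trans (min_le_right _ _) (min_le_left _ _)

lemma routeF_le_BV {dAU dAV dBU dBV : ℕ} {s t : ℝ} :
    routeF dAU dAV dBU dBV s t ≤ (1 - s) + (dBV : ℝ) + (1 - t) :=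
  le_trans (min_le_right _ _) (min_le_right _ _)

lemma rform_le_routeF {dAU dAV dBU dBV : ℕ} {CA1 CB1 CA2 CB2 : Prop} {s t : ℝ} :
    rform dAU dAV dBU dBV CA1 CB1 CA2 CB2 s t ≤ routeF dAU dAV dBU dBV s t :=
  min_le_left _ _

lemma rform_congr {dAU dAV dBU dBV dAU' dAV' dBU' dBV' : ℕ}
    {CA1 CB1 CA2 CB2 CA1' CB1' CA2' CB2' : Prop} {s t : ℝ}
    (h1 : dAU = dAU') (h2 : dAV = dAV') (h3 : dBU = dBU') (h4 : dBV = dBV')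
    (hC1 : CA1 ∧ CB1 ↔ CA1' ∧ CB1') (hC2 : CA2 ∧ CB2 ↔ CA2' ∧ CB2') :
    rform dAU dAV dBU dBV CA1 CB1 CA2 CB2 s t
      = rform dAU' dAV' dBU' dBV' CA1' CB1' CA2' CB2' s t := by
  subst h1 h2 h3 h4
  unfold rform
  rw [if_congr hC1 rfl rfl, if_congr hC2 rfl rfl]

/-- Key comparison: the abstracted `rdist` in the covering graph is at most the abstracted
`rdist` downstairs plus 2. -/
lemma rform_le_add_two {dAU dAV dBU dBV dAU' dAV' dBU' dBV' : ℕ}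
    {CA1 CB1 CA2 CB2 CA1' CB1' CA2' CB2' : Prop} {s t : ℝ}
    (hAU : (dAU' : ℝ) ≤ (dAU : ℝ) + 2) (hAV : (dAV' : ℝ) ≤ (dAV : ℝ) + 2)
    (hBU : (dBU' : ℝ) ≤ (dBU : ℝ) + 2) (hBV : (dBV' : ℝ) ≤ (dBV : ℝ) + 2)
    (hC1 : CA1 ∧ CB1 → (dAV' : ℝ) ≤ 1) (hC2 : CA2 ∧ CB2 → (dAU' : ℝ) ≤ 1) :
    rform dAU' dAV' dBU' dBV' CA1' CB1' CA2' CB2' s t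
      ≤ rform dAU dAV dBU dBV CA1 CB1 CA2 CB2 s t + 2 := by
  have hroute : routeF dAU' dAV' dBU' dBV' s t ≤ routeF dAU dAV dBU dBV s t + 2 := by
    unfold routeF
    rw [← min_add_add_right, ← min_add_add_right, ← min_add_add_right]
    refine min_le_min (min_le_min ?_ ?_) (min_le_min ?_ ?_) <;> linarith
  have hX : rform dAU' dAV' dBU' dBV' CA1' CB1' CA2' CB2' s t ≤ routeF dAU dAV dBU dBV s t + 2 :=
    le_trans rform_le_routeF hroute
  have hY : rform dAU' dAV' dBU' dBV' CA1' CB1' CA2' CB2' s t ≤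
      (if CA1 ∧ CB1 then |s - t| else routeF dAU dAV dBU dBV s t) + 2 := by
    by_cases h : CA1 ∧ CB1
    · rw [if_pos h]
      have habs : s - t ≤ |s - t| := le_abs_self _
      have hd := hC1 h
      calc rform dAU' dAV' dBU' dBV' CA1' CB1' CA2' CB2' s t ≤ routeF dAU' dAV' dBU' dBV' s t :=
            rform_le_routeF
        _ ≤ s + (dAV' : ℝ) + (1 - t) := routeF_le_AV
        _ ≤ |s - t| + 2 := by linarith
    · rw [if_neg h]; exact hX
  have hZ : rform dAU' dAV' dBU' dBV' CA1' CB1' CA2' CB2' s t ≤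
      (if CA2 ∧ CB2 then |s + t - 1| else routeF dAU dAV dBU dBV s t) + 2 := by
    by_cases h : CA2 ∧ CB2
    · rw [if_pos h]
      have habs : s + t - 1 ≤ |s + t - 1| := le_abs_self _
      have habs' : -(s + t - 1) ≤ |s + t - 1| := neg_le_abs _
      have hd := hC2 h
      calc rform dAU' dAV' dBU' dBV' CA1' CB1' CA2' CB2' s t ≤ routeF dAU' dAV' dBU' dBV' s t :=
            rform_le_routeF
        _ ≤ s + (dAU' : ℝ) + t := routeF_le_AU
        _ ≤ |s + t - 1| + 2 := by linarith
    · rw [if_neg h]; exact hX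
  calc rform dAU' dAV' dBU' dBV' CA1' CB1' CA2' CB2' s t ≤
      min (routeF dAU dAV dBU dBV s t + 2)
        (min ((if CA1 ∧ CB1 then |s - t| else routeF dAU dAV dBU dBV s t) + 2)
          ((if CA2 ∧ CB2 then |s + t - 1| else routeF dAU dAV dBU dBV s t) + 2)) :=
        le_min hX (le_min hY hZ)
    _ = rform dAU dAV dBU dBV CA1 CB1 CA2 CB2 s t + 2 := by
        rw [rform, min_add_add_right, min_add_add_right]

/-! ### `cdist` lemmas -/

lemma bddBelow_cdist (n : ℕ) (p q : ℝ) :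
    BddBelow (Set.range fun k : ℤ => |p - q + k * (n : ℝ)|) := by
  refine ⟨0, ?_⟩
  rintro x ⟨k, rfl⟩
  exact abs_nonneg _

lemma cdist_le (n : ℕ) (p q : ℝ) (k : ℤ) : cdist n p q ≤ |p - q + k * (n : ℝ)| :=
  ciInf_le (bddBelow_cdist n p q) k

lemma le_cdist {n : ℕ} {p q m : ℝ} (h : ∀ k : ℤ, m ≤ |p - q + k * (n : ℝ)|) :
    m ≤ cdist n p q :=
  le_ciInf h

/-- Lower bound on `cdist` between (casts of) naturals at combinatorial distance `m`. -/
lemma cdist_nat_lower {n m : ℕ} (hmn : m ≤ n) (a : ℕ) :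
    min (m : ℝ) ((n : ℝ) - m) ≤ cdist n (a : ℝ) ((a + m : ℕ) : ℝ) := by
  apply le_cdist
  intro k
  have hm : (m : ℝ) ≤ (n : ℝ) := by exact_mod_cast hmn
  push_cast
  rcases le_or_gt k 0 with hk | hk
  · have hk' : (k : ℝ) ≤ 0 := by exact_mod_cast hk
    have hn0 : (0 : ℝ) ≤ n := Nat.cast_nonneg n
    have : (k : ℝ) * n ≤ 0 := mul_nonpos_of_nonpos_of_nonneg hk' hn0
    have habs : -((a : ℝ) - (a + m) + k * n) ≤ |(a : ℝ) - (a + m) + k * n| := neg_le_abs _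
    have : (m : ℝ) ≤ |(a : ℝ) - (a + m) + k * n| := by linarith
    exact le_trans (min_le_left _ _) this
  · have hk' : (1 : ℝ) ≤ (k : ℝ) := by exact_mod_cast hk
    have hn0 : (0 : ℝ) ≤ n := Nat.cast_nonneg n
    have : (n : ℝ) ≤ (k : ℝ) * n := le_mul_of_one_le_left hn0 hk'
    have habs : ((a : ℝ) - (a + m) + k * n) ≤ |(a : ℝ) - (a + m) + k * n| := le_abs_self _
    have : (n : ℝ) - m ≤ |(a : ℝ) - (a + m) + k * n| := by linarith
    exact le_trans (min_le_right _ _) this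

lemma cdist_half (n : ℕ) : cdist n 0 ((n : ℝ) / 2) = (n : ℝ) / 2 := by
  apply le_antisymm
  · have h := cdist_le n 0 ((n : ℝ) / 2) 0
    have e : |(0 : ℝ) - (n : ℝ) / 2 + (0 : ℤ) * (n : ℝ)| = (n : ℝ) / 2 := by
      rw [show (0 : ℝ) - (n : ℝ) / 2 + (0 : ℤ) * (n : ℝ) = -((n : ℝ) / 2) by push_cast; ring,
        abs_neg, abs_of_nonneg (by positivity)]
    rwa [e] at h
  · apply le_cdist
    intro k
    have hn0 : (0 : ℝ) ≤ n := Nat.cast_nonneg n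
    rcases le_or_gt k 0 with hk | hk
    · have hk' : (k : ℝ) ≤ 0 := by exact_mod_cast hk
      have : (k : ℝ) * n ≤ 0 := mul_nonpos_of_nonpos_of_nonneg hk' hn0
      have habs : -((0 : ℝ) - n / 2 + k * n) ≤ |(0 : ℝ) - n / 2 + k * n| := neg_le_abs _
      linarith
    · have hk' : (1 : ℝ) ≤ (k : ℝ) := by exact_mod_cast hk
      have : (n : ℝ) ≤ (k : ℝ) * n := le_mul_of_one_le_left hn0 hk'
      have habs : ((0 : ℝ) - n / 2 + k * n) ≤ |(0 : ℝ) - n / 2 + k * n| := le_abs_self _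
      linarith


/-! ### Lifting lemmas for a graph pulled back along a surjection -/

section Transfer

variable {W : Type*} {G : SimpleGraph V} {H : SimpleGraph W} {π : W → V}

lemma exists_adj_of_connected (hconn : G.Connected) (hnt : Nontrivial V) (a : V) :
    ∃ b, G.Adj a b := by
  obtain ⟨b, hb⟩ := exists_ne a
  obtain ⟨w⟩ := hconn.preconnected a b
  cases w with
  | nil => exact absurd rfl hb.symm
  | cons h' _ => exact ⟨_, h'⟩

lemma exists_lift_walk (hadj : ∀ x y, G.Adj (π x) (π y) → H.Adj x y)
    (hsurj : ∀ v, ∃ x, π x = v) :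
    ∀ {a b : V} (w : G.Walk a b) (x y : W), π x = a → π y = b → w.length ≠ 0 →
      ∃ w' : H.Walk x y, w'.length = w.length := by
  intro a b w
  induction w with
  | nil => intro x y _ _ h; exact absurd rfl h
  | @cons a c b h w ih =>
    intro x y hx hy _
    rcases Nat.eq_zero_or_pos w.length with h0 | hpos
    · have hcb : c = b := SimpleGraph.Walk.eq_of_length_eq_zero h0
      subst hcb
      refine ⟨SimpleGraph.Walk.cons (hadj x y (by rw [hx, hy]; exact h))
        SimpleGraph.Walk.nil, ?_⟩
      simp [h0]
    · obtain ⟨z, hz⟩ := hsurj c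
      obtain ⟨w', hw'⟩ := ih z y hz hy hpos.ne'
      exact ⟨SimpleGraph.Walk.cons (hadj x z (by rw [hx, hz]; exact h)) w', by simp [hw']⟩

lemma lift_connected (hconn : G.Connected) (hnt : Nontrivial V)
    (hadj : ∀ x y, H.Adj x y ↔ G.Adj (π x) (π y))
    (hsurj : ∀ v, ∃ x, π x = v) (hne : Nonempty W) : H.Connected := by
  rw [SimpleGraph.connected_iff]
  refine ⟨?_, hne⟩
  intro x y
  by_cases hpi : π x = π y
  · by_cases hxy : x = y
    · subst hxy; exact SimpleGraph.Reachable.refl x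
    · obtain ⟨b, hb⟩ := exists_adj_of_connected hconn hnt (π x)
      obtain ⟨z, hz⟩ := hsurj b
      have h1 : H.Adj x z := (hadj x z).2 (by rw [hz]; exact hb)
      have h2 : H.Adj z y := (hadj z y).2 (by rw [hz, ← hpi]; exact hb.symm)
      exact h1.reachable.trans h2.reachable
  · obtain ⟨w⟩ := hconn.preconnected (π x) (π y)
    have hlen : w.length ≠ 0 := fun h0 =>
      hpi (SimpleGraph.Walk.eq_of_length_eq_zero h0)
    obtain ⟨w', _⟩ := exists_lift_walk (fun x y h => (hadj x y).2 h) hsurj w x y rfl rfl hlen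
    exact ⟨w'⟩

lemma dist_le_lift_dist (hadj : ∀ x y, H.Adj x y ↔ G.Adj (π x) (π y))
    (hHconn : H.Connected) (x y : W) :
    G.dist (π x) (π y) ≤ H.dist x y := by
  obtain ⟨w, hw⟩ := hHconn.exists_walk_length_eq_dist x y
  have h2 := SimpleGraph.dist_le
    (w.map (⟨π, fun h => (hadj _ _).1 h⟩ : H →g G))
  rwa [SimpleGraph.Walk.length_map, hw] at h2

lemma lift_dist_le (hadj : ∀ x y, H.Adj x y ↔ G.Adj (π x) (π y))
    (hconn : G.Connected) (hsurj : ∀ v, ∃ x, π x = v)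
    {x y : W} (h : π x ≠ π y) : H.dist x y ≤ G.dist (π x) (π y) := by
  obtain ⟨w, hw⟩ := hconn.exists_walk_length_eq_dist (π x) (π y)
  have hlen : w.length ≠ 0 := fun h0 => h (SimpleGraph.Walk.eq_of_length_eq_zero h0)
  obtain ⟨w', hw'⟩ := exists_lift_walk (fun x y h => (hadj x y).2 h) hsurj w x y rfl rfl hlen
  have := SimpleGraph.dist_le w'
  rwa [hw', hw] at this

lemma lift_dist_eq (hadj : ∀ x y, H.Adj x y ↔ G.Adj (π x) (π y))
    (hconn : G.Connected) (hHconn : H.Connected) (hsurj : ∀ v, ∃ x, π x = v)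
    {x y : W} (h : π x ≠ π y) : H.dist x y = G.dist (π x) (π y) :=
  le_antisymm (lift_dist_le hadj hconn hsurj h) (dist_le_lift_dist hadj hHconn x y)

lemma lift_dist_le_two (hadj : ∀ x y, H.Adj x y ↔ G.Adj (π x) (π y))
    (hconn : G.Connected) (hnt : Nontrivial V) (hsurj : ∀ v, ∃ x, π x = v)
    {x y : W} (h : π x = π y) : (H.dist x y : ℝ) ≤ 2 := by
  by_cases hxy : x = y
  · subst hxy; simp [SimpleGraph.dist_self]
  · obtain ⟨b, hb⟩ := exists_adj_of_connected hconn hnt (π x)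
    obtain ⟨z, hz⟩ := hsurj b
    have h1 : H.Adj x z := (hadj x z).2 (by rw [hz]; exact hb)
    have h2 : H.Adj z y := (hadj z y).2 (by rw [hz, ← h]; exact hb.symm)
    have hd := SimpleGraph.dist_le
      (SimpleGraph.Walk.cons h1 (SimpleGraph.Walk.cons h2 SimpleGraph.Walk.nil))
    have : H.dist x y ≤ 2 := by simpa using hd
    exact_mod_cast this

lemma lift_dist_le_one (hadj : ∀ x y, H.Adj x y ↔ G.Adj (π x) (π y))
    {x y : W} (h : G.Adj (π x) (π y)) : (H.dist x y : ℝ) ≤ 1 := by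
  have hd := SimpleGraph.dist_le (SimpleGraph.Walk.cons ((hadj x y).2 h) SimpleGraph.Walk.nil)
  have : H.dist x y ≤ 1 := by simpa using hd
  exact_mod_cast this

end Transfer


/-! ### Cycle transfer -/

lemma val_natCast_eq_self {n : ℕ} [NeZero n] (x : ZMod n) : ((x.val : ℕ) : ZMod n) = x := by
  rw [ZMod.natCast_val, ZMod.cast_id]

lemma rdist_nat_le (G : SimpleGraph V) {n : ℕ} (c : ZMod n → V) (a b : ℕ) :
    rdist G n c (a : ℝ) (b : ℝ)
      ≤ (G.dist (c ((a : ℕ) : ZMod n)) (c ((b : ℕ) : ZMod n)) : ℝ) := by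
  rw [rdist_eq]
  refine le_trans rform_le_routeF (le_trans routeF_le_AU ?_)
  rw [Int.fract_natCast, Int.fract_natCast, Int.floor_natCast, Int.floor_natCast,
    Int.cast_natCast, Int.cast_natCast]
  simp

section CycleTransfer

variable {W : Type*} {G : SimpleGraph V} {H : SimpleGraph W} {π : W → V}

lemma shortcut_transfer
    (hadj : ∀ x y, H.Adj x y ↔ G.Adj (π x) (π y))
    (hconn : G.Connected) (hHconn : H.Connected) (hnt : Nontrivial V)
    (hsurj : ∀ v, ∃ x, π x = v) :
    (Shortcut G → Shortcut H) ∧ (StronglyShortcut G → StronglyShortcut H) := by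
  constructor
  · rintro ⟨θ, hθ⟩
    refine ⟨max θ 6, ?_⟩
    intro n c' hn hcyc hiso
    rcases le_or_gt n 6 with h6 | h6
    · exact le_trans h6 (le_max_right _ _)
    haveI : NeZero n := ⟨hn.ne'⟩
    set c : ZMod n → V := fun i => π (c' i) with hc
    have hcycG : IsCycle G n c := fun i => (hadj _ _).1 (hcyc i)
    -- key lower bound from isometry
    have key : ∀ (i : ZMod n) (m : ℕ), m ≤ n →
        min (m : ℝ) ((n : ℝ) - m) ≤ (H.dist (c' i) (c' (i + (m : ZMod n))) : ℝ) := by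
      intro i m hmn
      have h1 := cdist_nat_lower (n := n) hmn i.val
      have h2 := rdist_nat_le H c' i.val (i.val + m)
      rw [hiso] at h2
      have hidx1 : ((i.val : ℕ) : ZMod n) = i := val_natCast_eq_self i
      have hidx2 : ((i.val + m : ℕ) : ZMod n) = i + (m : ZMod n) := by
        push_cast
        rw [val_natCast_eq_self]
      rw [hidx1, hidx2] at h2
      exact le_trans h1 h2
    -- π ∘ c' is injective
    have hinj : ∀ i j : ZMod n, π (c' i) = π (c' j) → i = j := by
      intro i j hpi
      by_contra hij
      -- the two-step case
      have claim2 : ∀ i j : ZMod n, π (c' i) = π (c' j) → j = i + 2 → False := by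
        intro i j hpi hj2
        have hk := key (i - 1) 3 (by omega)
        have hidx : (i - 1) + ((3 : ℕ) : ZMod n) = j := by
          rw [hj2]; push_cast; ring
        rw [hidx] at hk
        have hmin : (3 : ℝ) ≤ min ((3 : ℕ) : ℝ) ((n : ℝ) - (3 : ℕ)) := by
          have : (7 : ℝ) ≤ (n : ℝ) := by exact_mod_cast h6
          push_cast
          refine le_min le_rfl (by linarith)
        have hup : (H.dist (c' (i - 1)) (c' j) : ℝ) ≤ 1 := by
          apply lift_dist_le_one hadj
          have hA : G.Adj (c (i - 1)) (c ((i - 1) + 1)) := hcycG (i - 1)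
          have e1 : (i - 1) + 1 = i := by ring
          rw [e1] at hA
          show G.Adj (π (c' (i - 1))) (π (c' j))
          rw [← hpi]
          exact hA
        linarith [le_trans hmin hk]
      set m := (j - i).val with hm
      have hm0 : m ≠ 0 := by
        intro h0
        apply hij
        have : ((m : ℕ) : ZMod n) = j - i := val_natCast_eq_self (j - i)
        rw [h0] at this
        have : j - i = 0 := by simpa using this.symm
        have := sub_eq_zero.mp this
        exact this.symm
      have hmlt : m < n := ZMod.val_lt _
      have hji : j = i + (m : ZMod n) := by
        rw [hm, val_natCast_eq_self]; ring
      have hcases : m = 1 ∨ m = 2 ∨ m = n - 1 ∨ m = n - 2 ∨ (3 ≤ m ∧ m + 3 ≤ n) := by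
        omega
      rcases hcases with h1 | h2 | hn1 | hn2 | ⟨h3a, h3b⟩
      · -- adjacent vertices with equal image
        have hA : G.Adj (c i) (c (i + 1)) := hcycG i
        have : c (i + 1) = c i := by
          show π (c' (i + 1)) = π (c' i)
          have : j = i + 1 := by rw [hji, h1]; push_cast; ring
          rw [← this, ← hpi]
        rw [this] at hA
        exact G.irrefl hA
      · exact claim2 i j hpi (by rw [hji, h2]; push_cast; ring)
      · have hA : G.Adj (c j) (c (j + 1)) := hcycG j
        have hji' : j = i - 1 := by
          rw [hji, hn1]
          push_cast [Nat.cast_sub (by omega : 1 ≤ n)]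
          rw [ZMod.natCast_self]
          ring
        have : c (j + 1) = c j := by
          show π (c' (j + 1)) = π (c' j)
          have : j + 1 = i := by rw [hji']; ring
          rw [this, hpi]
        rw [this] at hA
        exact G.irrefl hA
      · refine claim2 j i hpi.symm ?_
        have : j = i - 2 := by
          rw [hji, hn2]
          push_cast [Nat.cast_sub (by omega : 2 ≤ n)]
          rw [ZMod.natCast_self]
          ring
        rw [this]; ring
      · -- distant vertices with equal image
        have hk := key i m (by omega)
        rw [← hji] at hk
        have hup : (H.dist (c' i) (c' j) : ℝ) ≤ 2 :=
          lift_dist_le_two hadj hconn hnt hsurj hpi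
        have hmin : (3 : ℝ) ≤ min (m : ℝ) ((n : ℝ) - m) := by
          have e1 : (3 : ℝ) ≤ (m : ℝ) := by exact_mod_cast h3a
          have e2 : (m : ℝ) + 3 ≤ (n : ℝ) := by exact_mod_cast h3b
          exact le_min e1 (by linarith)
        linarith [le_trans hmin hk]
    -- transfer the isometric cycle
    have hceq : ∀ i j : ZMod n, c i = c j ↔ c' i = c' j := by
      intro i j
      constructor
      · intro h; rw [hinj i j h]
      · intro h; show π (c' i) = π (c' j); rw [h]
    have hdist : ∀ i j : ZMod n, G.dist (c i) (c j) = H.dist (c' i) (c' j) := by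
      intro i j
      by_cases h : i = j
      · subst h; simp [SimpleGraph.dist_self]
      · exact (lift_dist_eq hadj hconn hHconn hsurj (fun hpi => h (hinj i j hpi))).symm
    have hisoG : IsIsometricCycle G n c := by
      intro p q
      rw [← hiso p q, rdist_eq, rdist_eq]
      exact rform_congr (hdist _ _) (hdist _ _) (hdist _ _) (hdist _ _)
        (and_congr (hceq _ _) (hceq _ _)) (and_congr (hceq _ _) (hceq _ _))
    exact le_trans (hθ n c hn hcycG hisoG) (le_max_left _ _)
  · rintro ⟨θ, ξ, hξ0, hξ1, hθ⟩
    refine ⟨max θ ⌈(8 / (1 - ξ))⌉₊, (1 + ξ) / 2, by linarith, by linarith, ?_⟩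
    intro n c' hn hcyc ha
    rcases le_or_gt n (max θ ⌈(8 / (1 - ξ))⌉₊) with h | h
    · exact h
    have hnR : (8 / (1 - ξ) : ℝ) ≤ (n : ℝ) := by
      refine le_trans (Nat.le_ceil _) ?_
      exact Nat.cast_le.mpr (le_of_lt (lt_of_le_of_lt (le_max_right _ _) h))
    have hx2 : 2 ≤ (1 - ξ) / 2 * ((n : ℝ) / 2) := by
      rw [div_le_iff₀ (by linarith : (0 : ℝ) < 1 - ξ)] at hnR
      nlinarith
    set c : ZMod n → V := fun i => π (c' i) with hc
    have hcycG : IsCycle G n c := fun i => (hadj _ _).1 (hcyc i)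
    have hd2 : ∀ i j : ZMod n, (H.dist (c' i) (c' j) : ℝ) ≤ (G.dist (c i) (c j) : ℝ) + 2 := by
      intro i j
      by_cases hpi : π (c' i) = π (c' j)
      · have h1 := lift_dist_le_two hadj hconn hnt hsurj hpi
        have h2 : (0 : ℝ) ≤ (G.dist (c i) (c j) : ℝ) := Nat.cast_nonneg _
        linarith
      · have := lift_dist_eq hadj hconn hHconn hsurj hpi
        show (H.dist (c' i) (c' j) : ℝ) ≤ (G.dist (π (c' i)) (π (c' j)) : ℝ) + 2
        have h0 : (0 : ℝ) ≤ (G.dist (π (c' i)) (π (c' j)) : ℝ) := Nat.cast_nonneg _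
        rw [this]
        linarith
    have hcomp : ∀ p q : ℝ, rdist H n c' p q ≤ rdist G n c p q + 2 := by
      intro p q
      rw [rdist_eq, rdist_eq]
      refine rform_le_add_two (hd2 _ _) (hd2 _ _) (hd2 _ _) (hd2 _ _) ?_ ?_
      · rintro ⟨h1, h2⟩
        apply lift_dist_le_one hadj
        show G.Adj (c ((⌊p⌋ : ℤ) : ZMod n)) (c (((⌊q⌋ : ℤ) : ZMod n) + 1))
        rw [← h2]
        exact hcycG _
      · rintro ⟨h1, h2⟩
        apply lift_dist_le_one hadj
        show G.Adj (c ((⌊p⌋ : ℤ) : ZMod n)) (c ((⌊q⌋ : ℤ) : ZMod n))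
        rw [← h2]
        exact hcycG _
    have haG : IsAlmostIsometricCycle G n c ξ := by
      intro p q hant
      have h1 := ha p q hant
      have h2 := hcomp p q
      have e : ξ * ((n : ℝ) / 2)
          = (1 + ξ) / 2 * ((n : ℝ) / 2) - (1 - ξ) / 2 * ((n : ℝ) / 2) := by ring
      linarith
    exact le_trans (hθ n c hn hcycG haG) (le_max_left _ _)

end CycleTransfer


/-! ### The two constructions -/

lemma top_dist_le_one {A : Type*} (a b : A) : (((⊤ : SimpleGraph A).dist a b : ℕ) : ℝ) ≤ 1 := by
  rcases eq_or_ne a b with rfl | h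
  · simp [SimpleGraph.dist_self]
  · rw [SimpleGraph.dist_top_of_ne h]; norm_num

lemma rdist_half_le_two {A : Type*} (n : ℕ) (c : ZMod n → A) :
    rdist (⊤ : SimpleGraph A) n c 0 ((n : ℝ) / 2) ≤ 2 := by
  rw [rdist_eq]
  refine le_trans rform_le_routeF (le_trans routeF_le_AU ?_)
  have h1 := top_dist_le_one (c ((⌊(0 : ℝ)⌋ : ℤ) : ZMod n)) (c ((⌊(n : ℝ) / 2⌋ : ℤ) : ZMod n))
  have h2 := (Int.fract_lt_one ((n : ℝ) / 2)).le
  have h3 := Int.fract_nonneg ((n : ℝ) / 2)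
  rw [Int.fract_zero]
  linarith

/-- The finite case: a finite group acts freely and cocompactly on the complete graph. -/
lemma finite_case (Gp : Type) [Group Gp] (hfin : Finite Gp) :
    ∃ (V' : Type) (G' : SimpleGraph V') (ρ' : Gp →* Equiv.Perm V'),
      G'.Connected ∧ IsGraphAction Gp G' ρ' ∧ FreeAction Gp ρ' ∧
        CocompactAction Gp G' ρ' ∧ Shortcut G' ∧ StronglyShortcut G' := by
  haveI := Fintype.ofFinite Gp
  haveI : Nonempty Gp := ⟨1⟩
  refine ⟨Gp, ⊤, MonoidHom.mk' (fun g => Equiv.mulLeft g)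
    (fun a b => Equiv.ext fun x => (mul_assoc a b x)), ?_, ?_, ?_, ?_, ?_, ?_⟩
  · exact SimpleGraph.connected_top
  · intro g u v
    simp only [SimpleGraph.top_adj, MonoidHom.mk'_apply, Equiv.coe_mulLeft]
    constructor
    · intro h he; exact h (by rw [he])
    · intro h he; exact h (mul_left_cancel he)
  · intro g hg x h
    simp only [MonoidHom.mk'_apply, Equiv.coe_mulLeft] at h
    have h2 : g * x = 1 * x := by rw [one_mul]; exact h
    exact hg (mul_right_cancel h2)
  · constructor
    · exact ⟨Finset.univ, fun x => ⟨x, 1, Finset.mem_univ 1,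
        by simp only [MonoidHom.mk'_apply, Equiv.coe_mulLeft, mul_one]⟩⟩
    · exact ⟨Finset.univ, fun u w _ => ⟨1, (u, w), Finset.mem_univ _,
        by simp only [MonoidHom.mk'_apply, Equiv.coe_mulLeft, one_mul], by
          simp only [MonoidHom.mk'_apply, Equiv.coe_mulLeft, one_mul]⟩⟩
  · refine ⟨6, fun n c hn hcyc hiso => ?_⟩
    have h1 := hiso 0 ((n : ℝ) / 2)
    rw [cdist_half] at h1
    have h2 := rdist_half_le_two n c
    rw [h1] at h2
    have : (n : ℝ) ≤ 4 := by linarith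
    have : n ≤ 4 := by exact_mod_cast this
    omega
  · refine ⟨8, 1/2, by norm_num, by norm_num, fun n c hn hcyc ha => ?_⟩
    have hant : Antipodal n 0 ((n : ℝ) / 2) := cdist_half n
    have h1 := ha 0 ((n : ℝ) / 2) hant
    have h2 := rdist_half_le_two n c
    have : (n : ℝ) ≤ 8 := by linarith
    exact_mod_cast this

/-- The infinite case: replace vertices by pairs (group element, orbit representative). -/
lemma infinite_case (Gp : Type) [Group Gp] {V : Type} (G : SimpleGraph V)
    (ρ : Gp →* Equiv.Perm V) (hconn : G.Connected) (hact : IsGraphAction Gp G ρ)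
    (hproper : ProperAction Gp ρ) (hcc : CocompactAction Gp G ρ) (hinf : ¬ Finite Gp) :
    ∃ (V' : Type) (G' : SimpleGraph V') (ρ' : Gp →* Equiv.Perm V'),
      G'.Connected ∧ IsGraphAction Gp G' ρ' ∧ FreeAction Gp ρ' ∧
        CocompactAction Gp G' ρ' ∧ (Shortcut G → Shortcut G') ∧
        (StronglyShortcut G → StronglyShortcut G') := by
  obtain ⟨⟨V₀, hV₀⟩, ⟨E₀, hE₀⟩⟩ := hcc
  obtain ⟨v⟩ := hconn.nonempty
  have hnt : Nontrivial V := by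
    by_contra hsub
    rw [not_nontrivial_iff_subsingleton] at hsub
    apply hinf
    have huniv : {g : Gp | ρ g v = v} = Set.univ :=
      Set.eq_univ_of_forall (fun g => Subsingleton.elim _ _)
    have hfin := hproper v
    rw [huniv] at hfin
    exact Set.finite_univ_iff.mp hfin
  classical
  set W := Gp × {x // x ∈ V₀} with hW
  set π : W → V := fun x => ρ x.1 x.2.1 with hπ
  set H : SimpleGraph W :=
    { Adj := fun x y => G.Adj (π x) (π y),
      symm := ⟨fun x y (h : G.Adj (π x) (π y)) => h.symm⟩,
      loopless := ⟨fun x h => G.irrefl h⟩ } with hH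
  have hadj : ∀ x y, H.Adj x y ↔ G.Adj (π x) (π y) := fun _ _ => Iff.rfl
  have hsurj : ∀ u : V, ∃ x : W, π x = u := by
    intro u; obtain ⟨g, v₀, hv₀, hg⟩ := hV₀ u; exact ⟨(g, ⟨v₀, hv₀⟩), hg⟩
  have hneW : Nonempty W := by
    obtain ⟨x, _⟩ := hsurj v; exact ⟨x⟩
  have hHconn : H.Connected := lift_connected hconn hnt hadj hsurj hneW
  set ρ' : Gp →* Equiv.Perm W := MonoidHom.mk'
    (fun g => Equiv.prodCongr (Equiv.mulLeft g) (Equiv.refl _))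
    (fun a b => Equiv.ext fun x => by
      cases x with
      | mk xa xb => simp [Equiv.prodCongr_apply, mul_assoc]) with hρ'
  have happ : ∀ (g : Gp) (x : W), ρ' g x = (g * x.1, x.2) := by
    intro g x
    cases x with
    | mk xa xb => rfl
  have hπequi : ∀ (g : Gp) (x : W), π (ρ' g x) = ρ g (π x) := by
    intro g x
    rw [happ]
    show ρ (g * x.1) x.2.1 = ρ g (ρ x.1 x.2.1)
    rw [map_mul]
    rfl
  refine ⟨W, H, ρ', hHconn, ?_, ?_, ?_, (shortcut_transfer hadj hconn hHconn hnt hsurj).1,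
    (shortcut_transfer hadj hconn hHconn hnt hsurj).2⟩
  · intro g x y
    show G.Adj (π (ρ' g x)) (π (ρ' g y)) ↔ G.Adj (π x) (π y)
    rw [hπequi, hπequi]
    exact hact g (π x) (π y)
  · intro g hg x h
    rw [happ] at h
    have h1 : g * x.1 = x.1 := congrArg Prod.fst h
    exact hg (by
      have : g * x.1 = 1 * x.1 := by rw [one_mul]; exact h1
      exact mul_right_cancel this)
  · constructor
    · refine ⟨Finset.image (fun s : {x // x ∈ V₀} => ((1 : Gp), s)) Finset.univ, ?_⟩
      intro x
      refine ⟨x.1, (1, x.2), Finset.mem_image_of_mem _ (Finset.mem_univ _), ?_⟩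
      rw [happ]
      simp
    · -- finiteness of a fundamental set of edges
      have hfib : ∀ (b w : V), {g : Gp | ρ g b = w}.Finite := by
        intro b w
        rcases Set.eq_empty_or_nonempty {g : Gp | ρ g b = w} with he | ⟨g₀, hg₀⟩
        · rw [he]; exact Set.finite_empty
        · have hg₀' : ρ g₀ b = w := hg₀
          refine ((hproper b).image (fun s => g₀ * s)).subset ?_
          intro g hg
          have hg' : ρ g b = w := hg
          refine ⟨g₀⁻¹ * g, ?_, by group⟩
          show ρ (g₀⁻¹ * g) b = b
          rw [map_mul, Equiv.Perm.mul_apply, hg', ← hg₀', ← Equiv.Perm.mul_apply, ← map_mul,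
            inv_mul_cancel, map_one]
          rfl
      have hnbr : ∀ a : V, {w : V | G.Adj a w}.Finite := by
        intro a
        have hsub : {w : V | G.Adj a w} ⊆
            ⋃ e ∈ (E₀ : Set (V × V)), (fun g => ρ g e.2) '' {g : Gp | ρ g e.1 = a} := by
          intro w hw
          obtain ⟨g, e, he, h1, h2⟩ := hE₀ a w hw
          exact Set.mem_biUnion he ⟨g, h1, h2⟩
        exact (Set.Finite.biUnion E₀.finite_toSet (fun e _ => (hfib e.1 a).image _)).subset hsub
      have hKab : ∀ (a b : {x // x ∈ V₀}), {k : Gp | G.Adj (ρ 1 a.1) (ρ k b.1)}.Finite := by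
        intro a b
        have hsub : {k : Gp | G.Adj (ρ 1 a.1) (ρ k b.1)} ⊆
            ⋃ w ∈ {w : V | G.Adj (ρ 1 a.1) w}, {k : Gp | ρ k b.1 = w} :=
          fun k hk => Set.mem_biUnion hk rfl
        exact ((hnbr _).biUnion (fun w _ => hfib b.1 w)).subset hsub
      have hKall : (⋃ (a : {x // x ∈ V₀}) (b : {x // x ∈ V₀}),
          {k : Gp | G.Adj (ρ 1 a.1) (ρ k b.1)}).Finite :=
        Set.finite_iUnion (fun a => Set.finite_iUnion (fun b => hKab a b))
      have hKfin : {e : W × W | e.1.1 = 1 ∧ H.Adj e.1 e.2}.Finite := by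
        refine Set.Finite.subset
          ((((Set.finite_singleton (1 : Gp)).prod Set.finite_univ)).prod
            (hKall.prod Set.finite_univ)) ?_
        rintro ⟨⟨g1, a⟩, ⟨g2, b⟩⟩ ⟨he1, he2⟩
        simp only [Set.mem_prod, Set.mem_singleton_iff, Set.mem_univ, and_true] at he1 ⊢
        refine ⟨he1, ?_⟩
        refine Set.mem_iUnion.mpr ⟨a, Set.mem_iUnion.mpr ⟨b, ?_⟩⟩
        have : G.Adj (ρ g1 a.1) (ρ g2 b.1) := he2
        rw [he1] at this
        exact this
      refine ⟨hKfin.toFinset, ?_⟩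
      intro x y hxy
      refine ⟨x.1, ((1, x.2), (x.1⁻¹ * y.1, y.2)), ?_, ?_, ?_⟩
      · rw [Set.Finite.mem_toFinset]
        refine ⟨rfl, ?_⟩
        show G.Adj (ρ 1 x.2.1) (ρ (x.1⁻¹ * y.1) y.2.1)
        have key : G.Adj (ρ x.1 (ρ 1 x.2.1)) (ρ x.1 (ρ (x.1⁻¹ * y.1) y.2.1)) := by
          have e1 : ρ x.1 (ρ 1 x.2.1) = π x := by
            rw [← Equiv.Perm.mul_apply, ← map_mul, mul_one]
          have e2 : ρ x.1 (ρ (x.1⁻¹ * y.1) y.2.1) = π y := by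
            rw [← Equiv.Perm.mul_apply, ← map_mul, mul_inv_cancel_left]
          rw [e1, e2]
          exact hxy
        exact (hact x.1 _ _).mp key
      · rw [happ]; simp
      · rw [happ]; simp [mul_inv_cancel_left]

/-- Combined construction. -/
lemma main_construction (Gp : Type) [Group Gp] {V : Type} (G : SimpleGraph V)
    (ρ : Gp →* Equiv.Perm V) (hconn : G.Connected) (hact : IsGraphAction Gp G ρ)
    (hproper : ProperAction Gp ρ) (hcc : CocompactAction Gp G ρ) :
    ∃ (V' : Type) (G' : SimpleGraph V') (ρ' : Gp →* Equiv.Perm V'),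
      G'.Connected ∧ IsGraphAction Gp G' ρ' ∧ FreeAction Gp ρ' ∧
        CocompactAction Gp G' ρ' ∧ (Shortcut G → Shortcut G') ∧
        (StronglyShortcut G → StronglyShortcut G') := by
  by_cases hfin : Finite Gp
  · obtain ⟨V', G', ρ', h1, h2, h3, h4, h5, h6⟩ := finite_case Gp hfin
    exact ⟨V', G', ρ', h1, h2, h3, h4, fun _ => h5, fun _ => h6⟩
  · exact infinite_case Gp G ρ hconn hact hproper hcc hfin

/-- Proposition `free`.  Let `G` be a shortcut group.  Then `G` acts freely
and cocompactly on a shortcut graph.  Likewise, if `G` is strongly shortcut, then `G` acts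
freely and cocompactly on a strongly shortcut graph. -/
theorem prop_free (Gp : Type) [Group Gp] :
    (ShortcutGroup Gp →
      ∃ (V : Type) (G : SimpleGraph V) (ρ : Gp →* Equiv.Perm V),
        G.Connected ∧ IsGraphAction Gp G ρ ∧ FreeAction Gp ρ ∧
          CocompactAction Gp G ρ ∧ Shortcut G) ∧
    (StronglyShortcutGroup Gp →
      ∃ (V : Type) (G : SimpleGraph V) (ρ : Gp →* Equiv.Perm V),
        G.Connected ∧ IsGraphAction Gp G ρ ∧ FreeAction Gp ρ ∧
          CocompactAction Gp G ρ ∧ StronglyShortcut G) := by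
  constructor
  · rintro ⟨V, G, ρ, hconn, hact, hproper, hcc, hsc⟩
    obtain ⟨V', G', ρ', h1, h2, h3, h4, h5, _⟩ :=
      main_construction Gp G ρ hconn hact hproper hcc
    exact ⟨V', G', ρ', h1, h2, h3, h4, h5 hsc⟩
  · rintro ⟨V, G, ρ, hconn, hact, hproper, hcc, hsc⟩
    obtain ⟨V', G', ρ', h1, h2, h3, h4, _, h6⟩ :=
      main_construction Gp G ρ hconn hact hproper hcc
    exact ⟨V', G', ρ', h1, h2, h3, h4, h6 hsc⟩

end ShortcutGraphs
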